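/- Machine runs in the sequential λ-calculus compose along term composition: if (R,M) ⇓ (S,*) and (S,N) ⇓ (T,*) then (R, M;N) ⇓ (T,*). -/
import Mathlib


/-- Terms of the sequential λ-calculus in de Bruijn representation
(so terms are automatically identified up to α-equivalence):
nil `*`, variable prefix `x.M`, push/application `[N].M`,
and pop/abstraction `<x>.M`. -/
inductive STm : Type
  | star : STm
  | var  : Nat → STm → STm
  | push : STm → STm → STm
  | pop  : STm → STm

namespace STm

/-- Lifting of a renaming under a binder. -/
def liftF (f : Nat → Nat) : Nat → Nat
  | 0 => 0
  | n+1 => f n + 1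

/-- Renaming of de Bruijn indices. -/
def rename (f : Nat → Nat) : STm → STm
  | star => star
  | var n M => var (f n) (rename f M)
  | push N M => push (rename f N) (rename f M)
  | pop M => pop (rename (liftF f) M)

/-- Capture-avoiding composition `N ; M`. -/
def comp : STm → STm → STm
  | star, P => P
  | var n N, P => var n (comp N P)
  | push Q N, P => push Q (comp N P)
  | pop N, P => pop (comp N (rename Nat.succ P))

/-- Lifting of a substitution under a binder. -/
def liftS (σ : Nat → STm) : Nat → STm
  | 0 => var 0 star
  | n+1 => rename Nat.succ (σ n)

/-- Capture-avoiding simultaneous substitution; note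
`{N/x}(x.M) = N ; {N/x}M`. -/
def subst (σ : Nat → STm) : STm → STm
  | star => star
  | var n M => comp (σ n) (subst σ M)
  | push N M => push (subst σ N) (subst σ M)
  | pop M => pop (subst (liftS σ) M)

/-- Capture-avoiding substitution `{N/x}M` of `N` for the variable bound
immediately outside `M`. -/
def subst1 (N : STm) : STm → STm :=
  subst (fun n => match n with | 0 => N | n+1 => var n star)

end STm

/-- Machine states: a stack of terms (written bottom-first, so the top
element is the last element of the list) together with a term. -/
abbrev SState := List STm × STm

/-- The transitions of the sequential stack machine:
`(S, [N].M) → (S·N, M)` and `(S·N, <x>.M) → (S, {N/x}M)`. -/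
inductive SMStep : SState → SState → Prop
  | push (S : List STm) (N M : STm) : SMStep (S, .push N M) (S ++ [N], M)
  | pop (S : List STm) (N M : STm) : SMStep (S ++ [N], .pop M) (S, STm.subst1 N M)

/-- A run of the sequential machine: a finite sequence of transitions. -/
def SRun : SState → SState → Prop := Relation.ReflTransGen SMStep

namespace STm

lemma liftF_comp (f g : Nat → Nat) : liftF f ∘ liftF g = liftF (f ∘ g) := by
  funext n; cases n <;> rfl

lemma rename_rename (f g : Nat → Nat) (M : STm) :
    rename f (rename g M) = rename (f ∘ g) M := by
  induction M generalizing f g with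
  | star => rfl
  | var n M ih => simp [rename, ih]
  | push N M ihN ihM => simp [rename, ihN, ihM]
  | pop M ih => simp [rename, ih, liftF_comp]

lemma liftF_succ (f : Nat → Nat) : liftF f ∘ Nat.succ = Nat.succ ∘ f := by
  funext n; rfl

lemma rename_comp (f : Nat → Nat) (A B : STm) :
    rename f (comp A B) = comp (rename f A) (rename f B) := by
  induction A generalizing f B with
  | star => rfl
  | var n M ih => simp [comp, rename, ih]
  | push N M ihN ihM => simp [comp, rename, ihM]
  | pop M ih =>
      simp [comp, rename, ih, rename_rename, liftF_succ]

lemma liftS_liftF (σ : Nat → STm) (f : Nat → Nat) :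
    liftS σ ∘ liftF f = liftS (σ ∘ f) := by
  funext n; cases n <;> rfl

lemma subst_rename (σ : Nat → STm) (f : Nat → Nat) (M : STm) :
    subst σ (rename f M) = subst (σ ∘ f) M := by
  induction M generalizing σ f with
  | star => rfl
  | var n M ih => simp [rename, subst, ih]
  | push N M ihN ihM => simp [rename, subst, ihN, ihM]
  | pop M ih => simp [rename, subst, ih, liftS_liftF]

lemma rename_liftS (f : Nat → Nat) (σ : Nat → STm) :
    rename (liftF f) ∘ liftS σ = liftS (rename f ∘ σ) := by
  funext n; cases n with
  | zero => rfl
  | succ n =>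
      simp [liftS, Function.comp, rename_rename, liftF_succ]

lemma rename_subst (f : Nat → Nat) (σ : Nat → STm) (M : STm) :
    rename f (subst σ M) = subst (rename f ∘ σ) M := by
  induction M generalizing f σ with
  | star => rfl
  | var n M ih => simp [subst, rename_comp, ih]
  | push N M ihN ihM => simp [subst, rename, ihN, ihM]
  | pop M ih => simp [subst, rename, ih, rename_liftS]

lemma comp_assoc (A B C : STm) : comp (comp A B) C = comp A (comp B C) := by
  induction A generalizing B C with
  | star => rfl
  | var n M ih => simp [comp, ih]
  | push N M ihN ihM => simp [comp, ihM]
  | pop M ih => simp [comp, ih, rename_comp]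

lemma subst_comp (σ : Nat → STm) (A B : STm) :
    subst σ (comp A B) = comp (subst σ A) (subst σ B) := by
  induction A generalizing σ B with
  | star => rfl
  | var n M ih => simp [comp, subst, ih, comp_assoc]
  | push N M ihN ihM => simp [comp, subst, ihM]
  | pop M ih =>
      simp only [comp, subst, ih, subst_rename, rename_subst]
      have : liftS σ ∘ Nat.succ = rename Nat.succ ∘ σ := by
        funext n; rfl
      rw [this]

lemma subst_idlike (M : STm) : subst (fun n => var n star) M = M := by
  induction M with
  | star => rfl
  | var n M ih => simp [subst, comp, ih]
  | push N M ihN ihM => simp [subst, ihN, ihM]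
  | pop M ih =>
      simp [subst]
      convert ih using 2
      funext n; cases n <;> rfl

lemma subst1_rename (P N : STm) : subst1 P (rename Nat.succ N) = N := by
  simp [subst1, subst_rename]
  exact subst_idlike N

lemma subst1_comp (P A B : STm) :
    subst1 P (comp A (rename Nat.succ B)) = comp (subst1 P A) B := by
  simp [subst1, subst_comp]
  congr 1
  exact subst1_rename P B

end STm

lemma SMStep.comp_right {R R' : List STm} {M M' : STm} (N : STm)
    (h : SMStep (R, M) (R', M')) :
    SMStep (R, M.comp N) (R', M'.comp N) := by
  cases h with
  | push S0 P M0 => exact SMStep.push _ _ _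
  | pop S0 P M0 =>
      rw [show M0.pop.comp N = (M0.comp (STm.rename Nat.succ N)).pop from rfl,
        ← STm.subst1_comp]
      exact SMStep.pop _ P _

lemma srun_comp_right {a b : SState} (h : SRun a b) (N : STm) :
    SRun (a.1, a.2.comp N) (b.1, b.2.comp N) := by
  induction h with
  | refl => exact Relation.ReflTransGen.refl
  | tail hs hstep ih =>
      exact ih.tail (SMStep.comp_right N hstep)

/-- Machine runs compose along term composition: if `(R,M) ⇓ (S,*)` and
`(S,N) ⇓ (T,*)` then `(R, M;N) ⇓ (T,*)`. -/
theorem seq_run_comp (R S T : List STm) (M N : STm)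
    (h1 : SRun (R, M) (S, .star)) (h2 : SRun (S, N) (T, .star)) :
    SRun (R, M.comp N) (T, .star) := by
  have h := srun_comp_right h1 N
  simp only [STm.comp] at h
  exact Relation.ReflTransGen.trans h h2
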